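/- For k ≥ 1, the coefficient of x^{4k-n} in the polynomial (1+...+x^{2k-2})(1+...+x^{k-2}) + x^{k-1}(1+...+x^{k-1})^2 equals: 2(n-k)−5 when 2n−3 ≤ 4k ≤ 4n−12; 4k−n+1 when n ≤ 4k ≤ 2n−4; and 0 when 4k < n or 4k > 4n−12 (with n ≥ 4 an integer). -/

import Mathlib

/-!
The coefficient of `x^d` in `(1 + ... + x^a)(1 + ... + x^b)` counts the `i` with
`max 0 (d - b) ≤ i ≤ min d a`, a piecewise-linear function of `d`. The coefficient in question is
a sum of two such counts, and on each range of `k` it is evaluated by linear arithmetic.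
-/

open Polynomial

/-- The geometric sum polynomial `1 + x + ... + x^m` in `ℤ[x]`, interpreted as `0` if `m < 0`. -/
noncomputable def geom (m : ℤ) : Polynomial ℤ :=
  ∑ j ∈ Finset.range (m + 1).toNat, X ^ j

lemma coeff_toLaurent_natCast {R : Type*} [Semiring R] (p : R[X]) (m : ℕ) :
    p.toLaurent.coeff m = p.coeff m := by
  rw [LaurentPolynomial.coeff_toLaurent]
  exact Finsupp.mapDomain_apply Nat.castEmbedding.injective _ m

lemma coeff_toLaurent_of_neg {R : Type*} [Semiring R] (p : R[X]) {d : ℤ} (hd : d < 0) :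
    p.toLaurent.coeff d = 0 := by
  rw [LaurentPolynomial.coeff_toLaurent]
  refine Finsupp.mapDomain_of_notMem_range _ _ ?_
  rintro ⟨m, rfl⟩
  simp only [Nat.castEmbedding_apply] at hd
  omega

lemma coeff_geom (m : ℤ) (i : ℕ) : (geom m).coeff i = if (i : ℤ) ≤ m then 1 else 0 := by
  simp only [geom, finsetSum_coeff, coeff_X_pow, Finset.sum_ite_eq, Finset.mem_range,
    Int.lt_toNat]
  congr 1
  simp only [eq_iff_iff]
  omega

/-- The number of pairs `(i, j)` of integers with `0 ≤ i ≤ a`, `0 ≤ j ≤ b` and `i + j = e`. -/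
def convCount (a b e : ℤ) : ℤ :=
  max 0 (min e a - max 0 (e - b) + 1)

lemma coeff_geom_mul_geom (a b : ℤ) (d : ℕ) :
    (geom a * geom b).coeff d = convCount a b d := by
  rw [coeff_mul, Finset.Nat.sum_antidiagonal_eq_sum_range_succ_mk]
  simp only [coeff_geom, ite_mul, one_mul, zero_mul, ← ite_and, Finset.sum_boole]
  have hfilter : {i ∈ Finset.range (d + 1) | ((i : ℕ) : ℤ) ≤ a ∧ ((d - i : ℕ) : ℤ) ≤ b}
      = Finset.Ico ((d : ℤ) - b).toNat (min (d : ℤ) a + 1).toNat := by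
    ext i
    simp only [Finset.mem_filter, Finset.mem_range, Finset.mem_Ico]
    omega
  rw [convCount, Nat.succ_eq_add_one, hfilter, Nat.card_Ico]
  omega

lemma coeff_geom_mul_geom_add_X_pow_mul_geom_sq (k d : ℕ) (hk : 1 ≤ k) :
    (geom (2 * (k : ℤ) - 2) * geom ((k : ℤ) - 2)
        + X ^ (k - 1) * (geom ((k : ℤ) - 1)) ^ 2).coeff d
      = convCount (2 * k - 2) (k - 2) d + convCount (k - 1) (k - 1) (d - (k - 1)) := by
  rw [coeff_add, mul_comm (X ^ (k - 1) : ℤ[X]), coeff_mul_X_pow', sq, coeff_geom_mul_geom]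
  split_ifs with hd
  · rw [coeff_geom_mul_geom, Nat.cast_sub hd, Nat.cast_sub hk, Nat.cast_one]
  · unfold convCount
    omega

theorem stmt12_general (n k : ℕ) (hk : 1 ≤ k)
    (p : Polynomial ℤ)
    (hp : p = geom (2 * (k : ℤ) - 2) * geom ((k : ℤ) - 2)
        + X ^ (k - 1) * (geom ((k : ℤ) - 1)) ^ 2)
    (c : ℤ) (hc : c = (Polynomial.toLaurent p).coeff (4 * (k : ℤ) - (n : ℤ))) :
    (2 * (n : ℤ) - 3 ≤ 4 * (k : ℤ) → 4 * (k : ℤ) ≤ 4 * (n : ℤ) - 12 →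
      c = 2 * ((n : ℤ) - (k : ℤ)) - 5) ∧
    ((n : ℤ) ≤ 4 * (k : ℤ) → 4 * (k : ℤ) ≤ 2 * (n : ℤ) - 4 →
      c = 4 * (k : ℤ) - (n : ℤ) + 1) ∧
    (4 * (k : ℤ) < (n : ℤ) → c = 0) ∧
    (4 * (n : ℤ) - 12 < 4 * (k : ℤ) → c = 0) := by
  subst hp hc
  rcases lt_or_ge (4 * (k : ℤ) - n) 0 with hneg | hnonneg
  · rw [coeff_toLaurent_of_neg _ hneg]
    omega
  · obtain ⟨d, hd⟩ := Int.eq_ofNat_of_zero_le hnonneg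
    rw [hd, coeff_toLaurent_natCast, coeff_geom_mul_geom_add_X_pow_mul_geom_sq k d hk, ← hd]
    unfold convCount
    omega

/-- The coefficient of `x^{4k-n}` (with `4k-n ∈ ℤ`, coefficients of negative powers being `0`)
in `(1+...+x^{2k-2})(1+...+x^{k-2}) + x^{k-1}(1+...+x^{k-1})²`. -/
theorem stmt12 (n k : ℕ) (hn : 4 ≤ n) (hk : 1 ≤ k)
    (p : Polynomial ℤ)
    (hp : p = geom (2 * (k : ℤ) - 2) * geom ((k : ℤ) - 2)
        + X ^ (k - 1) * (geom ((k : ℤ) - 1)) ^ 2)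
    (c : ℤ) (hc : c = (Polynomial.toLaurent p).coeff (4 * (k : ℤ) - (n : ℤ))) :
    (2 * (n : ℤ) - 3 ≤ 4 * (k : ℤ) → 4 * (k : ℤ) ≤ 4 * (n : ℤ) - 12 →
      c = 2 * ((n : ℤ) - (k : ℤ)) - 5) ∧
    ((n : ℤ) ≤ 4 * (k : ℤ) → 4 * (k : ℤ) ≤ 2 * (n : ℤ) - 4 →
      c = 4 * (k : ℤ) - (n : ℤ) + 1) ∧
    (4 * (k : ℤ) < (n : ℤ) → c = 0) ∧
    (4 * (n : ℤ) - 12 < 4 * (k : ℤ) → c = 0) :=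
  stmt12_general n k hk p hp c hc
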